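/- Let A be a complex abelian variety, 𝒜 a symmetric very ample line bundle on A, X ⊆ A a smooth subvariety with σ(X, 𝒜|_X) > 0, and for ℓ ≥ 1 let X_ℓ = [ℓ]⁻¹(X) (assumed smooth and irreducible). Then σ(X_ℓ, 𝒜|_{X_ℓ}) ≥ ℓ²·σ(X, 𝒜|_X). -/
import Mathlib


open scoped ENNReal

/-- Let `A` be a complex abelian variety, `𝒜` a symmetric very ample
line bundle, `X ⊆ A` smooth with `σ(X, 𝒜|_X) > 0`, and `X_ℓ = [ℓ]⁻¹(X)` (smooth
and irreducible).  Then `σ(X_ℓ, 𝒜|_{X_ℓ}) ≥ ℓ² σ(X, 𝒜|_X)`.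
We work on the projectivized cotangent bundles `P₁ = Proj_X Ω¹_X` and
`P_ℓ = Proj_{X_ℓ} Ω¹_{X_ℓ}`: `A1, O1` (resp. `Al, Ol`) are the classes of
`p₁^*(𝒜|_X)` and `O_{P₁}(1)` (resp. of `p_ℓ^*(𝒜|_{X_ℓ})` and `O_{P_ℓ}(1)`),
`Φ` is pullback along the map `P_ℓ → P₁` induced by the finite étale map
`ρ_ℓ = [ℓ]|_{X_ℓ} : X_ℓ → X` (so that `Φ A1 = ℓ² Al` by Mumford's formula and
`Φ O1 = Ol` since `ρ_ℓ^* Ω¹_X ≅ Ω¹_{X_ℓ}`), and `Φ` preserves global generation.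
`σ` is the supremum (in `ℝ≥0∞`) of the ratios `a/m` with
`(p^*𝒜^∨)^{⊗a} ⊗ O(m)` globally generated. -/
theorem stmt17
    (PicP1 PicPl : Type*) [AddCommGroup PicP1] [AddCommGroup PicPl]
    (A1 O1 : PicP1) (Al Ol : PicPl)
    (GG1 : PicP1 → Prop) (GGl : PicPl → Prop)     -- global generation on P₁ and P_ℓ
    (ℓ : ℕ) (hℓ : 1 ≤ ℓ)
    (Φ : PicP1 →+ PicPl)                           -- pullback along P_ℓ → P₁
    (hΦA : Φ A1 = (ℓ ^ 2) • Al)                    -- Mumford's formula [ℓ]^*𝒜 ≅ 𝒜^{⊗ℓ²}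
    (hΦO : Φ O1 = Ol)                              -- ρ_ℓ^* Ω¹_X ≅ Ω¹_{X_ℓ}
    (hΦGG : ∀ M : PicP1, GG1 M → GGl (Φ M))       -- pullbacks of g.g. bundles are g.g.
    (hσpos : 0 < sSup {q : ℝ≥0∞ | ∃ a m : ℕ, 1 ≤ m ∧ q = (a : ℝ≥0∞) / (m : ℝ≥0∞) ∧
        GG1 (a • (-A1) + m • O1)}) :               -- σ(X, 𝒜|_X) > 0
    (ℓ : ℝ≥0∞) ^ 2 * sSup {q : ℝ≥0∞ | ∃ a m : ℕ, 1 ≤ m ∧ q = (a : ℝ≥0∞) / (m : ℝ≥0∞) ∧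
        GG1 (a • (-A1) + m • O1)}
      ≤ sSup {q : ℝ≥0∞ | ∃ a m : ℕ, 1 ≤ m ∧ q = (a : ℝ≥0∞) / (m : ℝ≥0∞) ∧
        GGl (a • (-Al) + m • Ol)} := by
  rw [ENNReal.mul_sSup]
  refine iSup_le fun x => iSup_le fun hx => ?_
  obtain ⟨a, m, hm, rfl, hgg⟩ := hx
  apply le_sSup
  refine ⟨a * ℓ ^ 2, m, hm, ?_, ?_⟩
  · push_cast
    rw [mul_comm ((a : ℝ≥0∞)) _, mul_div_assoc]
  · have := hΦGG _ hgg
    rw [map_add, map_nsmul, map_nsmul, map_neg, hΦA, hΦO] at this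
    convert this using 2
    rw [← neg_nsmul, smul_smul, mul_comm]
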